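/- In a time-dependent graph whose weights are all nonnegative and satisfy the FIFO property, if there exists at least one walk from s to d, then the shortest travel cost function inherits the FIFO property: the arrival map t ↦ t + f s d (t) is nondecreasing in t. -/
import Mathlib


/-- The travel cost of a walk (a nonempty list of vertices) when departing at time `t`:
`cost([x], t) = 0` and `cost(x :: y :: rest, t) = w x y t + cost(y :: rest, t + w x y t)`. -/
def tdCost {V : Type*} (w : V → V → ℝ → ℝ) : List V → ℝ → ℝ
  | [], _ => 0
  | [_], _ => 0
  | x :: y :: rest, t => w x y t + tdCost w (y :: rest) (t + w x y t)

/-- `p` is a walk from `s` to `d`: a nonempty finite sequence of vertices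
starting at `s` and ending at `d`. -/
def IsTDWalk {V : Type*} (p : List V) (s d : V) : Prop :=
  p ≠ [] ∧ p.head? = some s ∧ p.getLast? = some d

/-- The shortest travel cost function:
`f s d t = inf { cost(p, t) : p a walk from s to d }`. -/
noncomputable def tdShortest {V : Type*} (w : V → V → ℝ → ℝ) (s d : V) (t : ℝ) : ℝ :=
  sInf {c | ∃ p : List V, IsTDWalk p s d ∧ tdCost w p t = c}

lemma tdCost_nonneg {V : Type*} (w : V → V → ℝ → ℝ) (hnn : ∀ a b t, 0 ≤ w a b t) :
    ∀ (p : List V) (t : ℝ), 0 ≤ tdCost w p t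
  | [], _ => le_refl 0
  | [_], _ => le_refl 0
  | x :: y :: rest, t => by
    simp only [tdCost]
    exact add_nonneg (hnn x y t) (tdCost_nonneg w hnn (y :: rest) (t + w x y t))

lemma tdCost_arrival_mono {V : Type*} (w : V → V → ℝ → ℝ)
    (hfifo : ∀ a b, Monotone fun t => t + w a b t) :
    ∀ (p : List V), Monotone fun t => t + tdCost w p t
  | [] => by simp [tdCost]; exact monotone_id
  | [_] => by simp [tdCost]; exact monotone_id
  | x :: y :: rest => by
    have h1 := hfifo x y
    have h2 := tdCost_arrival_mono w hfifo (y :: rest)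
    have : (fun t => t + tdCost w (x :: y :: rest) t)
        = (fun u => u + tdCost w (y :: rest) u) ∘ (fun t => t + w x y t) := by
      funext t
      simp [tdCost, add_assoc]
    rw [this]
    exact h2.comp h1

/-- **The shortest travel cost function inherits the FIFO property.**
In a time-dependent graph whose weights are all nonnegative and FIFO, if there exists at
least one walk from `s` to `d`, then the arrival map `t ↦ t + f s d t` is nondecreasing. -/
theorem tdShortest_arrival_monotone {V : Type*} (w : V → V → ℝ → ℝ)
    (hnn : ∀ a b t, 0 ≤ w a b t)
    (hfifo : ∀ a b, Monotone fun t => t + w a b t)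
    (s d : V) (hwalk : ∃ p : List V, IsTDWalk p s d) :
    Monotone (fun t => t + tdShortest w s d t) := by
  intro t t' htt'
  obtain ⟨p0, hp0⟩ := hwalk
  have hne : ∀ u : ℝ, {c | ∃ p : List V, IsTDWalk p s d ∧ tdCost w p u = c}.Nonempty :=
    fun u => ⟨tdCost w p0 u, p0, hp0, rfl⟩
  have hbdd : ∀ u : ℝ, BddBelow {c | ∃ p : List V, IsTDWalk p s d ∧ tdCost w p u = c} := by
    intro u
    exact ⟨0, fun c ⟨p, _, hc⟩ => hc ▸ tdCost_nonneg w hnn p u⟩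
  simp only
  rw [tdShortest, tdShortest]
  have key : ∀ c ∈ {c | ∃ p : List V, IsTDWalk p s d ∧ tdCost w p t' = c},
      t + sInf {c | ∃ p : List V, IsTDWalk p s d ∧ tdCost w p t = c} ≤ t' + c := by
    rintro c ⟨p, hp, rfl⟩
    have h1 : sInf {c | ∃ p : List V, IsTDWalk p s d ∧ tdCost w p t = c} ≤ tdCost w p t :=
      csInf_le (hbdd t) ⟨p, hp, rfl⟩
    have h2 : t + tdCost w p t ≤ t' + tdCost w p t' := tdCost_arrival_mono w hfifo p htt'
    linarith
  have h : t + sInf {c | ∃ p : List V, IsTDWalk p s d ∧ tdCost w p t = c} - t'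
      ≤ sInf {c | ∃ p : List V, IsTDWalk p s d ∧ tdCost w p t' = c} :=
    le_csInf (hne t') (fun c hc => by linarith [key c hc])
  linarith
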